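/- Consider weighted k-approval spatial voting on ℝ with m = 2k candidates c_1 < ⋯ < c_m, voters 1, …, n with weights w_j > 0 and intervals [ℓ_j, u_j], and a distinguished candidate c* = c_{i*} with i* ≤ k. Say voter j can approve c* if there exists T ∈ [ℓ_j, u_j] with i* ∈ S_k(T). Define the completion T* by T*_j = ℓ_j if voter j can approve c*, and T*_j = u_j otherwise. Then c* is a possible winner if and only if under the completion T* the score of c* is at least the score of every other candidate. -/
import Mathlib


/-- Candidate `i` is ranked above candidate `j` by a voter at position `T`:
either strictly closer, or tied in distance with the smaller index winning. -/
def prefers {m : ℕ} (c : Fin m → ℝ) (T : ℝ) (i j : Fin m) : Prop :=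
  |T - c i| < |T - c j| ∨ (|T - c i| = |T - c j| ∧ i < j)

noncomputable instance {m : ℕ} (c : Fin m → ℝ) (T : ℝ) (i j : Fin m) :
    Decidable (prefers c T i j) :=
  inferInstanceAs (Decidable (_ ∨ _))

/-- The set of indices of the `k` highest-ranked candidates for a voter at position `T`:
those with fewer than `k` candidates ranked above them. -/
noncomputable def topk {m : ℕ} (c : Fin m → ℝ) (T : ℝ) (k : ℕ) : Finset (Fin m) :=
  Finset.univ.filter fun i => (Finset.univ.filter fun j => prefers c T j i).card < k

/-- The weighted `k`-approval score of candidate `i`: the sum of the weights of the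
voters whose top-`k` set contains `i`. -/
noncomputable def score {m n : ℕ} (c : Fin m → ℝ) (k : ℕ) (w T : Fin n → ℝ)
    (i : Fin m) : ℝ :=
  ∑ j, if i ∈ topk c (T j) k then w j else 0

open scoped Classical in
/-- The canonical completion: a voter who can place `c*` (index `istar`) among its top
`k` candidates somewhere in its interval is positioned at the left endpoint, and every
other voter at the right endpoint. -/
noncomputable def canonicalCompletion {m n : ℕ} (c : Fin m → ℝ) (k : ℕ)
    (lo hi : Fin n → ℝ) (istar : Fin m) : Fin n → ℝ :=
  fun j => if ∃ T ∈ Set.Icc (lo j) (hi j), istar ∈ topk c T k then lo j else hi j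

section PWAux
open Finset

noncomputable def rnk {m : ℕ} (c : Fin m → ℝ) (T : ℝ) (i : Fin m) : ℕ :=
  (Finset.univ.filter fun j => prefers c T j i).card

variable {m : ℕ} {c : Fin m → ℝ} {T T' : ℝ}

lemma mem_topk_iff {k : ℕ} {i : Fin m} : i ∈ topk c T k ↔ rnk c T i < k := by
  simp [topk, rnk]

lemma prefers_iff_lex (i j : Fin m) :
    prefers c T i j ↔ toLex (|T - c i|, i) < toLex (|T - c j|, j) := by
  rw [Prod.Lex.lt_iff]; exact Iff.rfl

lemma prefers_trans {i j l : Fin m} (h1 : prefers c T i j) (h2 : prefers c T j l) :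
    prefers c T i l := by
  rw [prefers_iff_lex] at h1 h2 ⊢; exact lt_trans h1 h2

lemma prefers_irrefl (i : Fin m) : ¬ prefers c T i i := by
  rw [prefers_iff_lex]; exact lt_irrefl _

lemma prefers_total {i j : Fin m} (h : i ≠ j) : prefers c T i j ∨ prefers c T j i := by
  rcases lt_trichotomy (toLex (|T - c i|, i)) (toLex (|T - c j|, j)) with h1 | h1 | h1
  · exact Or.inl ((prefers_iff_lex i j).2 h1)
  · exact absurd (congrArg Prod.snd (toLex_inj.mp h1)) h
  · exact Or.inr ((prefers_iff_lex j i).2 h1)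

lemma rnk_lt_rnk {i j : Fin m} (h : prefers c T i j) : rnk c T i < rnk c T j := by
  have hsub : (univ.filter fun x => prefers c T x i) ⊆ (univ.filter fun x => prefers c T x j) := by
    intro x hx
    simp only [mem_filter, mem_univ, true_and] at hx ⊢
    exact prefers_trans hx h
  exact Finset.card_lt_card ((Finset.ssubset_iff_of_subset hsub).2
    ⟨i, by simp [h], by simp [prefers_irrefl]⟩)

lemma prefers_iff_rnk {i j : Fin m} : prefers c T i j ↔ rnk c T i < rnk c T j := by
  refine ⟨rnk_lt_rnk, fun h => ?_⟩
  have hne : i ≠ j := by rintro rfl; exact lt_irrefl _ h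
  rcases prefers_total (c := c) (T := T) hne with h1 | h1
  · exact h1
  · exact absurd (rnk_lt_rnk h1) (by omega)

lemma card_filter_val_lt (m t : ℕ) (ht : t ≤ m) :
    (univ.filter fun x : Fin m => x.val < t).card = t := by
  have h2 : (univ.filter fun x : Fin m => x.val < t).card = (Finset.range t).card := by
    refine Finset.card_bij' (fun x _ => x.val)
        (fun y hy => (⟨y, lt_of_lt_of_le (mem_range.mp hy) ht⟩ : Fin m))
        (fun a ha => ?_) (fun a ha => ?_) (fun a ha => rfl) (fun a ha => rfl)
    · simp only [mem_filter, mem_univ, true_and] at ha; exact mem_range.mpr ha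
    · simp only [mem_filter, mem_univ, true_and]; exact mem_range.mp ha
  rw [h2, Finset.card_range]

lemma card_topk (c : Fin m → ℝ) (T : ℝ) {k : ℕ} (hk : k ≤ m) : (topk c T k).card = k := by
  have hρlt : ∀ i : Fin m, rnk c T i < m := by
    intro i
    have hsub : (univ.filter fun j => prefers c T j i) ⊆ univ.erase i := by
      intro x hx
      simp only [mem_filter, mem_univ, true_and] at hx
      exact Finset.mem_erase.2 ⟨by rintro rfl; exact prefers_irrefl _ hx, mem_univ _⟩
    calc rnk c T i ≤ (univ.erase i).card := Finset.card_le_card hsub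
      _ < univ.card := Finset.card_erase_lt_of_mem (mem_univ i)
      _ = m := by simp
  set ρ : Fin m → Fin m := fun i => ⟨rnk c T i, hρlt i⟩ with hρ
  have hinj : Function.Injective ρ := by
    intro a b hab
    by_contra hne
    have hv : rnk c T a = rnk c T b := congrArg Fin.val hab
    rcases prefers_total (c := c) (T := T) hne with h | h
    · exact absurd hv (Nat.ne_of_lt (rnk_lt_rnk h))
    · exact absurd hv.symm (Nat.ne_of_lt (rnk_lt_rnk h))
  have hsurj : Function.Surjective ρ := (Finite.injective_iff_bijective.mp hinj).2
  have h2 : (topk c T k).card = (univ.filter fun x : Fin m => x.val < k).card := by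
    refine Finset.card_bij (fun i _ => ρ i) (fun a ha => ?_)
        (fun a ha b hb hab => hinj hab) (fun b hb => ?_)
    · simp only [mem_filter, mem_univ, true_and]
      exact mem_topk_iff.mp ha
    · obtain ⟨a, rfl⟩ := hsurj b
      simp only [mem_filter, mem_univ, true_and] at hb
      exact ⟨a, mem_topk_iff.mpr hb, rfl⟩
  rw [h2, card_filter_val_lt m k hk]

lemma topk_interval (hc : StrictMono c) {k : ℕ} {a b d : Fin m} (hab : a < b) (hbd : b < d)
    (ha : a ∈ topk c T k) (hd : d ∈ topk c T k) : b ∈ topk c T k := by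
  rw [mem_topk_iff] at ha hd ⊢
  rcases le_or_gt (c b) T with h | h
  · have hca : c a < c b := hc hab
    have hpref : prefers c T b a := by
      left
      rw [abs_of_nonneg (by linarith), abs_of_nonneg (by linarith)]
      linarith
    exact lt_trans (rnk_lt_rnk hpref) ha
  · have hcd : c b < c d := hc hbd
    have hpref : prefers c T b d := by
      left
      rw [abs_of_neg (by linarith), abs_of_neg (by linarith)]
      linarith
    exact lt_trans (rnk_lt_rnk hpref) hd

lemma abs_mid {a b x : ℝ} (hab : a < b) : |x - b| < |x - a| ↔ a + b < 2 * x := by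
  rcases abs_cases (x - b) with ⟨e1, s1⟩ | ⟨e1, s1⟩ <;> rcases abs_cases (x - a) with ⟨e2, s2⟩ | ⟨e2, s2⟩ <;>
    rw [e1, e2] <;> constructor <;> intro h <;> linarith

lemma prefers_right_iff (hc : StrictMono c) {i j : Fin m} (hij : i < j) :
    prefers c T j i ↔ c i + c j < 2 * T := by
  rw [← abs_mid (hc hij)]
  constructor
  · rintro (h | ⟨h, hji⟩)
    · exact h
    · exact (lt_asymm hij hji).elim
  · exact Or.inl

lemma prefers_persist (hc : StrictMono c) {i j : Fin m} (hij : i < j) (hTT : T ≤ T')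
    (h : prefers c T j i) : prefers c T' j i := by
  rw [prefers_right_iff hc hij] at h ⊢
  linarith

lemma topk_dichotomy (hc : StrictMono c) {k : ℕ} {b : Fin m} (hb : b ∉ topk c T k) :
    (∀ x ∈ topk c T k, x < b) ∨ (∀ x ∈ topk c T k, b < x) := by
  by_contra hcon
  push_neg at hcon
  obtain ⟨⟨x, hx, hxb⟩, ⟨y, hy, hyb⟩⟩ := hcon
  have hbx : b < x := lt_of_le_of_ne (hxb) (by rintro rfl; exact hb hx)
  have hyb' : y < b := lt_of_le_of_ne (hyb) (by rintro rfl; exact hb hy)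
  exact hb (topk_interval hc hyb' hbx hy hx)

section twok
open Finset
variable {k : ℕ} {c : Fin (2 * k) → ℝ} {T T' : ℝ}

lemma pair_topk (hc : StrictMono c) {j0 j1 : Fin (2 * k)} (h0 : j0.val < k)
    (h1 : j1.val = j0.val + k) : j0 ∈ topk c T k ↔ j1 ∉ topk c T k := by
  have hcard : (topk c T k).card = k := card_topk c T (by omega)
  have hj01 : j0 < j1 := by rw [Fin.lt_def]; omega
  constructor
  · intro hj0 hj1
    have hsub : Finset.Icc j0 j1 ⊆ topk c T k := by
      intro x hx
      rw [Finset.mem_Icc] at hx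
      rcases eq_or_lt_of_le hx.1 with heq | hl
      · rwa [← heq]
      rcases eq_or_lt_of_le hx.2 with heq | hr
      · rwa [heq]
      · exact topk_interval hc hl hr hj0 hj1
    have hle := Finset.card_le_card hsub
    rw [Fin.card_Icc, hcard] at hle
    omega
  · intro hj1
    by_contra hj0
    rcases topk_dichotomy hc hj0 with hA | hA <;> rcases topk_dichotomy hc hj1 with hB | hB
    · have hsub : topk c T k ⊆ Finset.Iio j0 := fun x hx => Finset.mem_Iio.2 (hA x hx)
      have hle := Finset.card_le_card hsub
      rw [Fin.card_Iio, hcard] at hle; omega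
    · have hsub : topk c T k ⊆ Finset.Iio j0 := fun x hx => Finset.mem_Iio.2 (hA x hx)
      have hle := Finset.card_le_card hsub
      rw [Fin.card_Iio, hcard] at hle; omega
    · have hsub : topk c T k ⊆ Finset.Ioo j0 j1 :=
        fun x hx => Finset.mem_Ioo.2 ⟨hA x hx, hB x hx⟩
      have hle := Finset.card_le_card hsub
      rw [Fin.card_Ioo, hcard] at hle; omega
    · have hsub : topk c T k ⊆ Finset.Ioi j1 := fun x hx => Finset.mem_Ioi.2 (hB x hx)
      have hle := Finset.card_le_card hsub
      rw [Fin.card_Ioi, hcard] at hle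
      have := j1.isLt
      omega

lemma left_closed (hc : StrictMono c) {i j : Fin (2 * k)} (hji : j.val ≤ i.val)
    (hik : i.val < k) (hj : j ∈ topk c T k) : i ∈ topk c T k := by
  rcases eq_or_lt_of_le hji with heq | hlt
  · rwa [Fin.ext heq] at hj
  by_cases hi : i ∈ topk c T k
  · exact hi
  have hp : (⟨i.val + k, by omega⟩ : Fin (2 * k)) ∈ topk c T k := by
    by_contra hpn
    exact hi ((pair_topk hc hik rfl).mpr hpn)
  have h1 : j < i := by rw [Fin.lt_def]; omega
  have h2 : i < (⟨i.val + k, by omega⟩ : Fin (2 * k)) := by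
    rw [Fin.lt_def]; exact Nat.lt_add_of_pos_right (by omega)
  exact topk_interval hc h1 h2 hj hp

lemma topk_mono_left (hc : StrictMono c) (hTT : T ≤ T') {i : Fin (2 * k)} (hik : i.val < k)
    (h : i ∈ topk c T' k) : i ∈ topk c T k := by
  by_contra hni
  set p : Fin (2 * k) := ⟨i.val + k, by omega⟩ with hp
  have hpmem : p ∈ topk c T k := by
    by_contra hpn; exact hni ((pair_topk hc hik rfl).mpr hpn)
  have hip : i < p := by rw [Fin.lt_def]; exact Nat.lt_add_of_pos_right (by omega)
  have h1 : prefers c T p i := by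
    rw [prefers_iff_rnk]
    rw [mem_topk_iff] at hpmem
    rw [mem_topk_iff] at hni
    omega
  have h3 := rnk_lt_rnk (prefers_persist hc hip hTT h1)
  have h4 : p ∈ topk c T' k := mem_topk_iff.2 (lt_trans h3 (mem_topk_iff.1 h))
  exact (pair_topk (T := T') hc hik rfl).mp h h4

lemma topk_mono_right (hc : StrictMono c) (hTT : T ≤ T') {i : Fin (2 * k)} (hik : k ≤ i.val)
    (h : i ∈ topk c T k) : i ∈ topk c T' k := by
  by_contra hni
  have hisLt := i.isLt
  set p : Fin (2 * k) := ⟨i.val - k, by omega⟩ with hp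
  have hpk : p.val < k := by show i.val - k < k; omega
  have hpi : i.val = p.val + k := by show i.val = i.val - k + k; omega
  have hpmem : p ∈ topk c T' k := (pair_topk (T := T') hc hpk hpi).mpr hni
  have hpnT : p ∉ topk c T k := fun hp' => (pair_topk (T := T) hc hpk hpi).mp hp' h
  have hpi' : p < i := by rw [Fin.lt_def]; omega
  have h1 : prefers c T i p := by
    rw [prefers_iff_rnk]
    rw [mem_topk_iff] at h
    have : ¬ rnk c T p < k := fun hcon => hpnT (mem_topk_iff.2 hcon)
    omega
  have h3 := rnk_lt_rnk (prefers_persist hc hpi' hTT h1)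
  exact hni (mem_topk_iff.2 (lt_trans h3 (mem_topk_iff.1 hpmem)))

end twok

section twok2
open Finset
variable {k : ℕ} {c : Fin (2 * k) → ℝ} {T T' : ℝ}

lemma both_close (hc : StrictMono c) {a b : Fin (2 * k)} (hab : a.val ≤ b.val)
    (ha : a ∈ topk c T k) (hb : b ∈ topk c T k) : b.val < a.val + k := by
  have hk : 1 ≤ k := by
    by_contra hk0
    have := a.isLt
    omega
  have hcard : (topk c T k).card = k := card_topk c T (by omega)
  have hsub : Finset.Icc a b ⊆ topk c T k := by
    intro x hx
    rw [Finset.mem_Icc] at hx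
    rcases eq_or_lt_of_le hx.1 with heq | hl
    · rwa [← heq]
    rcases eq_or_lt_of_le hx.2 with heq | hr
    · rwa [heq]
    · exact topk_interval hc hl hr ha hb
  have hle := Finset.card_le_card hsub
  rw [Fin.card_Icc, hcard] at hle
  omega

lemma approve_persist_down (hc : StrictMono c) (hTT : T ≤ T') {istar i : Fin (2 * k)}
    (hsk : istar.val < k) (hns : istar ∉ topk c T k) (hub : i.val ≤ istar.val + k)
    (h : i ∈ topk c T' k) : i ∈ topk c T k := by
  by_cases hik : i.val < k
  · exact topk_mono_left hc hTT hik h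
  push_neg at hik
  set p : Fin (2 * k) := ⟨istar.val + k, by omega⟩ with hp
  have hpmem : p ∈ topk c T k := by
    by_contra hpn; exact hns ((pair_topk hc hsk rfl).mpr hpn)
  rcases eq_or_lt_of_le hub with heq | hlt
  · rwa [show i = p from Fin.ext heq]
  by_contra hni
  have hcard : (topk c T k).card = k := card_topk c T (by omega)
  rcases topk_dichotomy hc hni with hA | hA
  · have : p < i := hA p hpmem
    rw [Fin.lt_def] at this
    simp only [hp] at this
    omega
  · have hsub : topk c T k ⊆ Finset.Ioi i := fun x hx => Finset.mem_Ioi.2 (hA x hx)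
    have hle := Finset.card_le_card hsub
    rw [Fin.card_Ioi, hcard] at hle
    omega
end twok2

end PWAux

/-- For `m = 2k` and a distinguished candidate `c* = c_{i*}` with 1-based index `i* ≤ k`,
`c*` is a possible winner iff it wins under the canonical completion. -/
theorem possible_winner_iff_canonical {k n : ℕ} (hk : 1 ≤ k)
    (c : Fin (2 * k) → ℝ) (hc : StrictMono c)
    (w : Fin n → ℝ) (hw : ∀ j, 0 < w j)
    (lo hi : Fin n → ℝ) (hlohi : ∀ j, lo j ≤ hi j)
    (istar : Fin (2 * k)) (histar : (istar : ℕ) + 1 ≤ k) :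
    (∃ T : Fin n → ℝ, (∀ j, T j ∈ Set.Icc (lo j) (hi j)) ∧
        ∀ i, score c k w T i ≤ score c k w T istar) ↔
      (∀ i, score c k w (canonicalCompletion c k lo hi istar) i ≤
        score c k w (canonicalCompletion c k lo hi istar) istar) := by
  classical
  have hsk : istar.val < k := by omega
  set U := canonicalCompletion c k lo hi istar with hU
  have hUmem : ∀ j, U j ∈ Set.Icc (lo j) (hi j) := by
    intro j
    simp only [hU, canonicalCompletion]
    split_ifs
    · exact ⟨le_refl _, hlohi j⟩
    · exact ⟨hlohi j, le_refl _⟩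
  have hUlo : ∀ j, (∃ t ∈ Set.Icc (lo j) (hi j), istar ∈ topk c t k) → U j = lo j := by
    intro j hj; simp only [hU, canonicalCompletion]; rw [if_pos hj]
  have hUhi : ∀ j, ¬(∃ t ∈ Set.Icc (lo j) (hi j), istar ∈ topk c t k) → U j = hi j := by
    intro j hj; simp only [hU, canonicalCompletion]; rw [if_neg hj]
  have happlo : ∀ j, (∃ t ∈ Set.Icc (lo j) (hi j), istar ∈ topk c t k) →
      istar ∈ topk c (lo j) k := by
    rintro j ⟨t, ht, hmem⟩
    exact topk_mono_left hc ht.1 hsk hmem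
  have hUistar : ∀ j, istar ∈ topk c (U j) k ↔
      (∃ t ∈ Set.Icc (lo j) (hi j), istar ∈ topk c t k) := by
    intro j
    by_cases hj : ∃ t ∈ Set.Icc (lo j) (hi j), istar ∈ topk c t k
    · rw [hUlo j hj]
      exact ⟨fun _ => hj, fun _ => happlo j hj⟩
    · rw [hUhi j hj]
      constructor
      · intro hmem; exact absurd ⟨hi j, ⟨hlohi j, le_refl _⟩, hmem⟩ hj
      · intro h; exact absurd h hj
  constructor
  · rintro ⟨T, hT, hwin⟩
    have hTQ : ∀ j, istar ∈ topk c (T j) k → istar ∈ topk c (U j) k := by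
      intro j hj
      exact (hUistar j).2 ⟨T j, hT j, hj⟩
    have hscoreT : score c k w T istar ≤ score c k w U istar := by
      unfold score
      apply Finset.sum_le_sum
      intro j _
      by_cases hj : istar ∈ topk c (T j) k
      · rw [if_pos hj, if_pos (hTQ j hj)]
      · rw [if_neg hj]
        split_ifs
        · exact le_of_lt (hw j)
        · exact le_refl _
    intro i
    rcases lt_trichotomy i.val istar.val with hcase | hcase | hcase
    · unfold score
      apply Finset.sum_le_sum
      intro j _
      by_cases hj : i ∈ topk c (U j) k
      · rw [if_pos hj, if_pos (left_closed hc (le_of_lt hcase) hsk hj)]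
      · rw [if_neg hj]
        split_ifs
        · exact le_of_lt (hw j)
        · exact le_refl _
    · rw [show i = istar from Fin.ext hcase]
    · by_cases hub : i.val ≤ istar.val + k
      · have hkey : score c k w U i + score c k w T istar ≤
            score c k w T i + score c k w U istar := by
          unfold score
          rw [← Finset.sum_add_distrib, ← Finset.sum_add_distrib]
          apply Finset.sum_le_sum
          intro j _
          by_cases hQ : ∃ t ∈ Set.Icc (lo j) (hi j), istar ∈ topk c t k
          · have hUj : U j = lo j := hUlo j hQ
            have hlos : istar ∈ topk c (lo j) k := happlo j hQ
            rw [hUj]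
            by_cases hilo : i ∈ topk c (lo j) k
            · by_cases hist : istar ∈ topk c (T j) k
              · have hiT : i ∈ topk c (T j) k := by
                  by_cases hik : i.val < k
                  · exact left_closed hc (le_of_lt hcase) hik hist
                  · exact topk_mono_right hc (hT j).1 (not_lt.mp hik) hilo
                rw [if_pos hilo, if_pos hist, if_pos hiT, if_pos hlos]
              · rw [if_pos hilo, if_neg hist, if_pos hlos]
                split_ifs <;> linarith [hw j]
            · rw [if_neg hilo, if_pos hlos]
              split_ifs <;> linarith [hw j]
          · have hUj : U j = hi j := hUhi j hQ
            have hsT : istar ∉ topk c (T j) k := fun hmem => hQ ⟨T j, hT j, hmem⟩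
            have hshi : istar ∉ topk c (hi j) k :=
              fun hmem => hQ ⟨hi j, ⟨hlohi j, le_refl _⟩, hmem⟩
            rw [hUj, if_neg hsT, if_neg hshi]
            by_cases hihi : i ∈ topk c (hi j) k
            · have hiT : i ∈ topk c (T j) k :=
                approve_persist_down hc (hT j).2 hsk hsT hub hihi
              rw [if_pos hihi, if_pos hiT]
            · rw [if_neg hihi]
              split_ifs <;> linarith [hw j]
        have := hwin i
        linarith
      · push_neg at hub
        set p : Fin (2 * k) := ⟨istar.val + k, by omega⟩ with hp
        have hpair : ∀ (V : Fin n → ℝ),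
            score c k w V istar + score c k w V p = ∑ j, w j := by
          intro V
          unfold score
          rw [← Finset.sum_add_distrib]
          apply Finset.sum_congr rfl
          intro j _
          by_cases hj : istar ∈ topk c (V j) k
          · rw [if_pos hj, if_neg ((pair_topk hc hsk rfl).mp hj), add_zero]
          · have hpm : p ∈ topk c (V j) k := by
              by_contra hpn; exact hj ((pair_topk hc hsk rfl).mpr hpn)
            rw [if_neg hj, if_pos hpm, zero_add]
        have hsumU : score c k w U i + score c k w U istar ≤ ∑ j, w j := by
          unfold score
          rw [← Finset.sum_add_distrib]
          apply Finset.sum_le_sum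
          intro j _
          by_cases h1 : i ∈ topk c (U j) k
          · by_cases h2 : istar ∈ topk c (U j) k
            · exfalso
              have := both_close hc (by omega : istar.val ≤ i.val) h2 h1
              omega
            · rw [if_pos h1, if_neg h2, add_zero]
          · rw [if_neg h1, zero_add]
            split_ifs
            · exact le_refl _
            · exact le_of_lt (hw j)
        have h2 := hwin p
        have h3 := hpair T
        linarith
  · intro h
    exact ⟨U, hUmem, h⟩
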